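/- Let x ∈ S(A,b). Then x is a minimal solution if and only if x_j = δ_j(x) for every j, where δ_j(x) = min{t ∈ [0,1] : for all i, T_L(a_{ij}, t) + ∑_{k ≠ j} T_L(a_{ik}, x_k) ≥ b_i}. -/

import Mathlib

open Finset

noncomputable section

/-- Łukasiewicz t-norm. -/
def TL (a x : ℝ) : ℝ := max (a + x - 1) 0

/-- Solution set of the addition-Łukasiewicz system. -/
def Sset {m n : ℕ} (A : Fin m → Fin n → ℝ) (b : Fin m → ℝ) : Set (Fin n → ℝ) :=
  {x | (∀ j, x j ∈ Set.Icc (0:ℝ) 1) ∧ ∀ i, b i ≤ ∑ j, TL (A i j) (x j)}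

/-- Minimal solution. -/
def IsMinimalSol {m n : ℕ} (A : Fin m → Fin n → ℝ) (b : Fin m → ℝ) (x : Fin n → ℝ) : Prop :=
  x ∈ Sset A b ∧ ∀ y ∈ Sset A b, y ≤ x → y = x

/-- The set F_j(z). -/
def Fset {m n : ℕ} (A : Fin m → Fin n → ℝ) (b : Fin m → ℝ) (j : Fin n) (z : Fin n → ℝ) :
    Set ℝ :=
  {t | t ∈ Set.Icc (0:ℝ) 1 ∧
    ∀ i, b i ≤ TL (A i j) t + ∑ k ∈ Finset.univ.erase j, TL (A i k) (z k)}

/-- Objective Z(x) = max_j x_j. -/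
def Zf {n : ℕ} (x : Fin n → ℝ) : ℝ := ⨆ j, x j

/-- Optimal solution of the minimax problem. -/
def IsOptimal {m n : ℕ} (A : Fin m → Fin n → ℝ) (b : Fin m → ℝ) (x : Fin n → ℝ) : Prop :=
  x ∈ Sset A b ∧ ∀ y ∈ Sset A b, Zf x ≤ Zf y

/-!
Changing only the `j`-th coordinate of `x` to `t` keeps it a solution exactly when
`t ∈ Fset A b j x`; this set is closed, bounded below and contains `x j`, so its infimum
`δ_j(x)` is attained. If `x` is minimal, lowering `x j` to `δ_j(x)` gives a solution below `x`,
hence `x j = δ_j(x)`. Conversely, if `y ≤ x` is a solution then, since `T_L` is monotone,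
`y j ∈ Fset A b j x`, so `δ_j(x) ≤ y j ≤ x j` forces `y = x`.
-/

lemma monotone_TL (a : ℝ) : Monotone (TL a) :=
  fun _ _ h => max_le_max (by linarith) le_rfl

lemma continuous_TL (a : ℝ) : Continuous (TL a) := by
  unfold TL
  fun_prop

section

variable {m n : ℕ} {A : Fin m → Fin n → ℝ} {b : Fin m → ℝ} {j : Fin n} {x y : Fin n → ℝ}

lemma sum_TL_update (i : Fin m) (t : ℝ) :
    ∑ k, TL (A i k) (Function.update x j t k) =
      TL (A i j) t + ∑ k ∈ univ.erase j, TL (A i k) (x k) := by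
  rw [← add_sum_erase _ _ (mem_univ j), Function.update_self]
  congr 1
  exact sum_congr rfl fun k hk => by rw [Function.update_of_ne (ne_of_mem_erase hk)]

lemma update_mem_Sset_iff (hx : ∀ k, x k ∈ Set.Icc (0 : ℝ) 1) {t : ℝ} :
    Function.update x j t ∈ Sset A b ↔ t ∈ Fset A b j x := by
  simp only [Sset, Fset, Set.mem_ofPred_eq, sum_TL_update]
  refine and_congr_left fun _ => ⟨fun h => by simpa using h j, fun ht k => ?_⟩
  rcases eq_or_ne k j with rfl | hk
  · simpa using ht
  · simpa [Function.update_of_ne hk] using hx k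

lemma mem_Fset_self (hx : x ∈ Sset A b) : x j ∈ Fset A b j x := by
  rw [← update_mem_Sset_iff hx.1, Function.update_eq_self]
  exact hx

lemma Fset_mono (hyx : y ≤ x) : Fset A b j y ⊆ Fset A b j x := by
  refine fun t ⟨ht, hsum⟩ => ⟨ht, fun i => (hsum i).trans ?_⟩
  gcongr with k
  exact monotone_TL _ (hyx k)

lemma isClosed_Fset : IsClosed (Fset A b j x) := by
  rw [Fset, Set.ofPred_and, Set.ofPred_forall]
  exact isClosed_Icc.inter <| isClosed_iInter fun i =>
    isClosed_le continuous_const ((continuous_TL _).add continuous_const)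

lemma bddBelow_Fset : BddBelow (Fset A b j x) :=
  ⟨0, fun _ ht => ht.1.1⟩

lemma csInf_Fset_mem (hx : x ∈ Sset A b) : sInf (Fset A b j x) ∈ Fset A b j x :=
  isClosed_Fset.csInf_mem ⟨x j, mem_Fset_self hx⟩ bddBelow_Fset

end

theorem stmt11_general {m n : ℕ} (A : Fin m → Fin n → ℝ) (b : Fin m → ℝ)
    (x : Fin n → ℝ) (hx : x ∈ Sset A b) :
    IsMinimalSol A b x ↔ ∀ j, x j = sInf (Fset A b j x) := by
  constructor
  · rintro ⟨-, hmin⟩ j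
    set δ := sInf (Fset A b j x)
    have hδx : δ ≤ x j := csInf_le bddBelow_Fset (mem_Fset_self hx)
    have hupd_mem : Function.update x j δ ∈ Sset A b :=
      (update_mem_Sset_iff hx.1).2 (csInf_Fset_mem hx)
    have hupd_le : Function.update x j δ ≤ x := update_le_self_iff.2 hδx
    simpa using congrFun (hmin _ hupd_mem hupd_le) j |>.symm
  · refine fun h => ⟨hx, fun y hy hyx => funext fun j => le_antisymm (hyx j) ?_⟩
    rw [h j]
    exact csInf_le bddBelow_Fset (Fset_mono hyx (mem_Fset_self hy))

theorem stmt11 {m n : ℕ} (A : Fin m → Fin n → ℝ) (b : Fin m → ℝ)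
    (hA : ∀ i j, A i j ∈ Set.Icc (0:ℝ) 1) (hb : ∀ i, 0 < b i)
    (x : Fin n → ℝ) (hx : x ∈ Sset A b) :
    IsMinimalSol A b x ↔ ∀ j, x j = sInf (Fset A b j x) :=
  stmt11_general A b x hx
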